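/- There exists a constant C > 0 such that for every smooth compactly supported v : ℝ² → ℝ² and every smooth compactly supported d : ℝ² → ℝ³, the L² norm of the transport term (v·∇)d satisfies ‖(v·∇)d‖_{L²} ≤ C ‖v‖_{H¹} ‖d‖_{H²}, where ((v·∇)d)ʲ = Σ_{i=1}^{2} vⁱ ∂_i dʲ. (Lemma 2.2, estimate |B₂(v,d)|₂ ≤ c‖v‖₁‖d‖₂.) -/

import Mathlib

open MeasureTheory
open scoped ENNReal NNReal

local notation "E2" => (Fin 2 → ℝ)

-- coordinate fderiv
lemma fderiv_pi_apply' {κ : Type*} [Fintype κ] (g : E2 → κ → ℝ) (hg : Differentiable ℝ g)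
    (x y : E2) (j : κ) :
    fderiv ℝ (fun z => g z j) x y = fderiv ℝ g x y j := by
  have h : HasFDerivAt (fun z => g z j)
      ((ContinuousLinearMap.proj j).comp (fderiv ℝ g x)) x :=
    ((ContinuousLinearMap.proj j).hasFDerivAt.comp x (hg x).hasFDerivAt : )
  rw [h.fderiv]; rfl

-- operator norm of functional on ℝ² bounded by coordinate values
lemma opNorm_le_sum_coord (L : E2 →L[ℝ] ℝ) :
    ‖L‖ ≤ ∑ i : Fin 2, |L (Pi.single i 1)| := by
  apply ContinuousLinearMap.opNorm_le_bound
  · positivity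
  · intro y
    have hy : y = ∑ i : Fin 2, Pi.single i (y i) := (Finset.univ_sum_single y).symm
    calc ‖L y‖ = ‖∑ i : Fin 2, y i * L (Pi.single i 1)‖ := by
          nth_rewrite 1 [hy]
          rw [map_sum]
          congr 1
          apply Finset.sum_congr rfl
          intro i _
          have : (Pi.single i (y i) : Fin 2 → ℝ) = y i • (Pi.single i 1 : Fin 2 → ℝ) := by
            rw [← Pi.single_smul, smul_eq_mul, mul_one]
          rw [this, _root_.map_smul, smul_eq_mul]
      _ ≤ ∑ i : Fin 2, ‖y i * L (Pi.single i 1)‖ := norm_sum_le _ _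
      _ ≤ ∑ i : Fin 2, |L (Pi.single i 1)| * ‖y‖ := by
          apply Finset.sum_le_sum
          intro i _
          rw [norm_mul, mul_comm, Real.norm_eq_abs (L _)]
          gcongr
          exact norm_le_pi_norm y i
      _ = (∑ i : Fin 2, |L (Pi.single i 1)|) * ‖y‖ := (Finset.sum_mul ..).symm

lemma fderiv_sumsq {κ : Type*} [Fintype κ] (f : E2 → κ → ℝ) (hf : Differentiable ℝ f)
    (x y : E2) :
    fderiv ℝ (fun z => ∑ j, (f z j) ^ 2) x y = ∑ j, 2 * f x j * fderiv ℝ f x y j := by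
  have hj : ∀ j : κ, HasFDerivAt (fun z => f z j)
      ((ContinuousLinearMap.proj j).comp (fderiv ℝ f x)) x := fun j =>
    ((ContinuousLinearMap.proj j).hasFDerivAt.comp x (hf x).hasFDerivAt : )
  have h : HasFDerivAt (fun z => ∑ j, (f z j) ^ 2)
      (∑ j, (f x j • (ContinuousLinearMap.proj j).comp (fderiv ℝ f x)
        + f x j • (ContinuousLinearMap.proj j).comp (fderiv ℝ f x))) x := by
    apply HasFDerivAt.fun_sum
    intro j _
    have := (hj j).mul (hj j)
    simp only [pow_two]
    exact this
  rw [h.fderiv]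
  simp only [ContinuousLinearMap.sum_apply, ContinuousLinearMap.add_apply,
    ContinuousLinearMap.smul_apply, ContinuousLinearMap.coe_comp', Function.comp_apply,
    ContinuousLinearMap.proj_apply, smul_eq_mul]
  apply Finset.sum_congr rfl
  intro j _
  ring

lemma gns2 : ∃ C : ℝ, 0 < C ∧ ∀ φ : E2 → ℝ, ContDiff ℝ (⊤ : ℕ∞) φ → HasCompactSupport φ →
    ∫ x : E2, (φ x) ^ 2 ≤ C * (∫ x : E2, ‖fderiv ℝ φ x‖) ^ 2 := by
  set K := lintegralPowLePowLIntegralFDerivConst (volume : Measure E2) 2 with hK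
  refine ⟨(K : ℝ) + 1, by positivity, ?_⟩
  intro φ hφ h2φ
  have hp : Real.HolderConjugate (Module.finrank ℝ E2) 2 := by
    have : (Module.finrank ℝ E2 : ℝ) = 2 := by
      simp [Module.finrank_fintype_fun_eq_card]
    rw [this]
    exact Real.holderConjugate_iff.mpr ⟨one_lt_two, by norm_num⟩
  have h := lintegral_pow_le_pow_lintegral_fderiv (μ := (volume : Measure E2))
    (hφ.of_le (by simp)) h2φ hp
  have hι1 : Integrable (fun x : E2 => (φ x) ^ 2) := by
    refine (hφ.continuous.pow 2).integrable_of_hasCompactSupport ?_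
    have h2φ2 := h2φ.comp_left (g := fun t : ℝ => t ^ 2) (by simp)
    exact h2φ2
  have hcont2 : Continuous fun x : E2 => ‖fderiv ℝ φ x‖ := (hφ.continuous_fderiv (by simp)).norm
  have hι2 : Integrable (fun x : E2 => ‖fderiv ℝ φ x‖) :=
    hcont2.integrable_of_hasCompactSupport (h2φ.fderiv ℝ).norm
  have hB : 0 ≤ ∫ x : E2, ‖fderiv ℝ φ x‖ := integral_nonneg fun x => norm_nonneg _
  have e1 : ∫⁻ x : E2, (‖φ x‖₊ : ℝ≥0∞) ^ (2 : ℝ) = ENNReal.ofReal (∫ x : E2, (φ x) ^ 2) := by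
    rw [ofReal_integral_eq_lintegral_ofReal hι1
      (Filter.Eventually.of_forall fun x => sq_nonneg _)]
    apply lintegral_congr
    intro x
    rw [show (2 : ℝ) = ((2 : ℕ) : ℝ) by norm_num, ENNReal.rpow_natCast,
      show (φ x) ^ 2 = ‖φ x‖ ^ 2 by rw [Real.norm_eq_abs, sq_abs],
      ENNReal.ofReal_pow (norm_nonneg _), ofReal_norm]
    rfl
  have e2 : ∫⁻ x : E2, (‖fderiv ℝ φ x‖₊ : ℝ≥0∞)
      = ENNReal.ofReal (∫ x : E2, ‖fderiv ℝ φ x‖) := by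
    rw [ofReal_integral_eq_lintegral_ofReal hι2
      (Filter.Eventually.of_forall fun x => norm_nonneg _)]
    apply lintegral_congr
    intro x
    exact (ofReal_norm _).symm
  simp only [enorm_eq_nnnorm] at h
  rw [e1, e2] at h
  have h2 : ENNReal.ofReal (∫ x : E2, (φ x) ^ 2)
      ≤ ENNReal.ofReal ((K : ℝ) * (∫ x : E2, ‖fderiv ℝ φ x‖) ^ 2) := by
    refine h.trans_eq ?_
    rw [show (2 : ℝ) = ((2 : ℕ) : ℝ) by norm_num, ENNReal.rpow_natCast,
      ← ENNReal.ofReal_pow hB, ENNReal.ofReal_mul K.coe_nonneg, ENNReal.ofReal_coe_nnreal]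
    norm_num
    rfl
  have h3 := (ENNReal.ofReal_le_ofReal_iff (by positivity)).mp h2
  have hexp : ((K : ℝ) + 1) * (∫ x : E2, ‖fderiv ℝ φ x‖) ^ 2
      = (K : ℝ) * (∫ x : E2, ‖fderiv ℝ φ x‖) ^ 2 + (∫ x : E2, ‖fderiv ℝ φ x‖) ^ 2 := by ring
  rw [hexp]
  linarith [sq_nonneg (∫ x : E2, ‖fderiv ℝ φ x‖)]

lemma ladyzh {κ : Type*} [Fintype κ] : ∃ C : ℝ, 0 < C ∧
    ∀ f : E2 → κ → ℝ, ContDiff ℝ (⊤ : ℕ∞) f → HasCompactSupport f →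
    ∫ x : E2, (∑ j, (f x j) ^ 2) ^ 2 ≤
      C * ((∫ x : E2, ∑ j, (f x j) ^ 2)
        + ∫ x : E2, ∑ i : Fin 2, ∑ j, (fderiv ℝ f x (Pi.single i 1) j) ^ 2) ^ 2 := by
  obtain ⟨C₀, hC₀, hgns⟩ := gns2
  refine ⟨4 * C₀, by positivity, ?_⟩
  intro f hf h2f
  set F : E2 → ℝ := fun x => ∑ j, (f x j) ^ 2 with hFdef
  set G : E2 → ℝ := fun x => ∑ i : Fin 2, ∑ j, (fderiv ℝ f x (Pi.single i 1) j) ^ 2 with hGdef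
  have hFsm : ContDiff ℝ (⊤ : ℕ∞) F := by
    refine ContDiff.sum fun j _ => ?_
    exact (((ContinuousLinearMap.proj j).contDiff).comp hf).pow 2
  have h2F : HasCompactSupport F :=
    h2f.comp_left (g := fun u : κ → ℝ => ∑ j, (u j) ^ 2) (by simp)
  have hfd : Continuous (fderiv ℝ f) := hf.continuous_fderiv (by simp)
  have hGcont : Continuous G := by
    apply continuous_finset_sum
    intro i _
    apply continuous_finset_sum
    intro j _
    exact ((continuous_apply j).comp (hfd.clm_apply continuous_const)).pow 2
  have h2G : HasCompactSupport G :=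
    (h2f.fderiv ℝ).comp_left
      (g := fun A : E2 →L[ℝ] (κ → ℝ) => ∑ i : Fin 2, ∑ j, (A (Pi.single i 1) j) ^ 2) (by simp)
  have hFnn : ∀ x, 0 ≤ F x := fun x => Finset.sum_nonneg fun j _ => sq_nonneg _
  have hGnn : ∀ x, 0 ≤ G x := fun x =>
    Finset.sum_nonneg fun i _ => Finset.sum_nonneg fun j _ => sq_nonneg _
  have hιF : Integrable F := hFsm.continuous.integrable_of_hasCompactSupport h2F
  have hιG : Integrable G := hGcont.integrable_of_hasCompactSupport h2G
  have hIF : 0 ≤ ∫ x : E2, F x := integral_nonneg hFnn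
  have hIG : 0 ≤ ∫ x : E2, G x := integral_nonneg hGnn
  -- pointwise bound on ‖fderiv F x‖
  have hpt : ∀ x : E2, ‖fderiv ℝ F x‖ ≤ 4 * (Real.sqrt (F x) * Real.sqrt (G x)) := by
    intro x
    refine (opNorm_le_sum_coord _).trans ?_
    have key : ∀ i : Fin 2, |fderiv ℝ F x (Pi.single i 1)|
        ≤ 2 * (Real.sqrt (F x) * Real.sqrt (G x)) := by
      intro i
      rw [hFdef, fderiv_sumsq f (hf.differentiable (by simp)) x (Pi.single i 1)]
      have hGi : ∑ j, (fderiv ℝ f x (Pi.single i 1) j) ^ 2 ≤ G x := by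
        rw [hGdef]
        exact Finset.single_le_sum
          (f := fun i => ∑ j, (fderiv ℝ f x (Pi.single i 1) j) ^ 2)
          (fun i _ => Finset.sum_nonneg fun j _ => sq_nonneg _) (Finset.mem_univ i)
      have hcs : (∑ j, f x j * fderiv ℝ f x (Pi.single i 1) j) ^ 2
          ≤ F x * ∑ j, (fderiv ℝ f x (Pi.single i 1) j) ^ 2 :=
        Finset.sum_mul_sq_le_sq_mul_sq Finset.univ _ _
      have habs : |∑ j, f x j * fderiv ℝ f x (Pi.single i 1) j|
          ≤ Real.sqrt (F x) * Real.sqrt (G x) := by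
        rw [← Real.sqrt_sq_eq_abs, ← Real.sqrt_mul (hFnn x)]
        apply Real.sqrt_le_sqrt
        refine hcs.trans ?_
        exact mul_le_mul_of_nonneg_left hGi (hFnn x)
      calc |∑ j, 2 * f x j * fderiv ℝ f x (Pi.single i 1) j|
          = 2 * |∑ j, f x j * fderiv ℝ f x (Pi.single i 1) j| := by
            have h2 : (∑ j, 2 * f x j * fderiv ℝ f x (Pi.single i 1) j)
                = 2 * ∑ j, f x j * fderiv ℝ f x (Pi.single i 1) j := by
              rw [Finset.mul_sum]
              exact Finset.sum_congr rfl fun j _ => by ring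
            rw [h2, abs_mul, abs_two]
        _ ≤ 2 * (Real.sqrt (F x) * Real.sqrt (G x)) := by linarith
    calc ∑ i : Fin 2, |fderiv ℝ F x (Pi.single i 1)|
        ≤ ∑ _i : Fin 2, 2 * (Real.sqrt (F x) * Real.sqrt (G x)) :=
          Finset.sum_le_sum fun i _ => key i
      _ = 4 * (Real.sqrt (F x) * Real.sqrt (G x)) := by
          simp [Finset.sum_const]
          ring
  -- integrate the pointwise bound
  have hsqF : HasCompactSupport fun x => Real.sqrt (F x) :=
    h2F.comp_left (g := Real.sqrt) Real.sqrt_zero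
  have hprod_cont : Continuous fun x => Real.sqrt (F x) * Real.sqrt (G x) :=
    (hFsm.continuous.sqrt).mul (hGcont.sqrt)
  have hprod_supp : HasCompactSupport fun x => Real.sqrt (F x) * Real.sqrt (G x) :=
    hsqF.mul_right
  have hιprod : Integrable (fun x => Real.sqrt (F x) * Real.sqrt (G x)) :=
    hprod_cont.integrable_of_hasCompactSupport hprod_supp
  have hιdF : Integrable (fun x : E2 => ‖fderiv ℝ F x‖) :=
    ((hFsm.continuous_fderiv (by simp)).norm).integrable_of_hasCompactSupport (h2F.fderiv ℝ).norm
  have step1 : ∫ x : E2, ‖fderiv ℝ F x‖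
      ≤ 4 * ∫ x : E2, Real.sqrt (F x) * Real.sqrt (G x) := by
    rw [← integral_const_mul]
    exact integral_mono hιdF (hιprod.const_mul 4) hpt
  -- Hölder
  have step2 : ∫ x : E2, Real.sqrt (F x) * Real.sqrt (G x)
      ≤ Real.sqrt (∫ x : E2, F x) * Real.sqrt (∫ x : E2, G x) := by
    have hconj : Real.HolderConjugate 2 2 := Real.holderConjugate_iff.mpr ⟨one_lt_two, by norm_num⟩
    have hmF : MemLp (fun x => Real.sqrt (F x)) (ENNReal.ofReal 2) :=
      (hFsm.continuous.sqrt).memLp_of_hasCompactSupport hsqF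
    have hmG : MemLp (fun x => Real.sqrt (G x)) (ENNReal.ofReal 2) :=
      (hGcont.sqrt).memLp_of_hasCompactSupport
        (h2G.comp_left (g := Real.sqrt) Real.sqrt_zero)
    have h := integral_mul_le_Lp_mul_Lq_of_nonneg hconj
      (Filter.Eventually.of_forall fun x => Real.sqrt_nonneg (F x))
      (Filter.Eventually.of_forall fun x => Real.sqrt_nonneg (G x)) hmF hmG
    refine h.trans ?_
    have eF : ∫ x : E2, Real.sqrt (F x) ^ (2 : ℝ) = ∫ x : E2, F x := by
      apply integral_congr_ae
      filter_upwards with x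
      rw [show (2 : ℝ) = ((2 : ℕ) : ℝ) by norm_num, Real.rpow_natCast,
        Real.sq_sqrt (hFnn x)]
    have eG : ∫ x : E2, Real.sqrt (G x) ^ (2 : ℝ) = ∫ x : E2, G x := by
      apply integral_congr_ae
      filter_upwards with x
      rw [show (2 : ℝ) = ((2 : ℕ) : ℝ) by norm_num, Real.rpow_natCast,
        Real.sq_sqrt (hGnn x)]
    rw [eF, eG, ← Real.sqrt_eq_rpow, ← Real.sqrt_eq_rpow]
  -- AM-GM
  have step3 : Real.sqrt (∫ x : E2, F x) * Real.sqrt (∫ x : E2, G x)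
      ≤ ((∫ x : E2, F x) + ∫ x : E2, G x) / 2 := by
    nlinarith [Real.sq_sqrt hIF, Real.sq_sqrt hIG,
      sq_nonneg (Real.sqrt (∫ x : E2, F x) - Real.sqrt (∫ x : E2, G x)),
      Real.sqrt_nonneg (∫ x : E2, F x), Real.sqrt_nonneg (∫ x : E2, G x)]
  have htot : ∫ x : E2, ‖fderiv ℝ F x‖ ≤ 2 * ((∫ x : E2, F x) + ∫ x : E2, G x) := by
    calc ∫ x : E2, ‖fderiv ℝ F x‖ ≤ 4 * ∫ x : E2, Real.sqrt (F x) * Real.sqrt (G x) := step1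
      _ ≤ 4 * (Real.sqrt (∫ x : E2, F x) * Real.sqrt (∫ x : E2, G x)) := by linarith
      _ ≤ 2 * ((∫ x : E2, F x) + ∫ x : E2, G x) := by linarith
  have hmain := hgns F hFsm h2F
  have hnn : 0 ≤ ∫ x : E2, ‖fderiv ℝ F x‖ := integral_nonneg fun x => norm_nonneg _
  calc ∫ x : E2, (F x) ^ 2 ≤ C₀ * (∫ x : E2, ‖fderiv ℝ F x‖) ^ 2 := hmain
    _ ≤ C₀ * (2 * ((∫ x : E2, F x) + ∫ x : E2, G x)) ^ 2 := by
        have := pow_le_pow_left₀ hnn htot 2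
        nlinarith
    _ = 4 * C₀ * ((∫ x : E2, F x) + ∫ x : E2, G x) ^ 2 := by ring


/-- Lemma 2.2: `‖(v·∇)d‖_{L²} ≤ C ‖v‖_{H¹} ‖d‖_{H²}` for smooth compactly supported
`v : ℝ² → ℝ²` and `d : ℝ² → ℝ³`. -/
theorem b2_L2_estimate :
    ∃ C : ℝ, 0 < C ∧
      ∀ (v : (Fin 2 → ℝ) → (Fin 2 → ℝ)) (d : (Fin 2 → ℝ) → (Fin 3 → ℝ)),
        ContDiff ℝ (⊤ : ℕ∞) v → HasCompactSupport v → ContDiff ℝ (⊤ : ℕ∞) d → HasCompactSupport d →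
        (∫ x : Fin 2 → ℝ, ∑ j : Fin 3,
            (∑ i : Fin 2, v x i * fderiv ℝ d x (Pi.single i 1) j) ^ 2) ^ ((1 : ℝ) / 2)
          ≤ C * ((∫ x : Fin 2 → ℝ, ∑ j, (v x j) ^ 2)
                  + (∫ x : Fin 2 → ℝ, ∑ i, ∑ j, (fderiv ℝ v x (Pi.single i 1) j) ^ 2))
                ^ ((1 : ℝ) / 2)
              * ((∫ x : Fin 2 → ℝ, ∑ j, (d x j) ^ 2)
                  + (∫ x : Fin 2 → ℝ, ∑ i, ∑ j, (fderiv ℝ d x (Pi.single i 1) j) ^ 2)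
                  + (∫ x : Fin 2 → ℝ, ∑ i, ∑ i', ∑ j,
                      (fderiv ℝ (fun y => fderiv ℝ d y (Pi.single i' 1)) x
                        (Pi.single i 1) j) ^ 2))
                ^ ((1 : ℝ) / 2) := by
  obtain ⟨C₁, hC₁, hlad2⟩ := ladyzh (κ := Fin 2)
  obtain ⟨C₂, hC₂, hlad6⟩ := ladyzh (κ := Fin 2 × Fin 3)
  set K : ℝ := Real.sqrt (C₁ * C₂) with hKdef
  have hK : 0 < K := Real.sqrt_pos.mpr (by positivity)
  refine ⟨Real.sqrt K, Real.sqrt_pos.mpr hK, ?_⟩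
  intro v d hv hv2 hd hd2
  -- abbreviations
  set V : E2 → ℝ := fun x => ∑ j : Fin 2, (v x j) ^ 2 with hVdef
  set g : E2 → (Fin 2 × Fin 3) → ℝ :=
    fun x p => fderiv ℝ d x (Pi.single p.1 1) p.2 with hgdef
  set W : E2 → ℝ := fun x => ∑ p : Fin 2 × Fin 3, (g x p) ^ 2 with hWdef
  have hd' : ContDiff ℝ (⊤ : ℕ∞) (fderiv ℝ d) := hd.fderiv_right (by simp)
  have hgsm : ContDiff ℝ (⊤ : ℕ∞) g := by
    rw [hgdef]
    apply contDiff_pi.mpr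
    intro p
    exact ((ContinuousLinearMap.proj p.2).comp
      (ContinuousLinearMap.apply ℝ (Fin 3 → ℝ) (Pi.single p.1 1))).contDiff.comp hd'
  have hg2 : HasCompactSupport g := by
    apply (hd2.fderiv ℝ).comp_left
      (g := fun A : E2 →L[ℝ] (Fin 3 → ℝ) => fun p : Fin 2 × Fin 3 => A (Pi.single p.1 1) p.2)
    funext p
    simp
  have hVsm : ContDiff ℝ (⊤ : ℕ∞) V := by
    refine ContDiff.sum fun j _ => ?_
    exact (((ContinuousLinearMap.proj j).contDiff).comp hv).pow 2
  have h2V : HasCompactSupport V :=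
    hv2.comp_left (g := fun u : Fin 2 → ℝ => ∑ j, (u j) ^ 2) (by simp)
  have hWsm : ContDiff ℝ (⊤ : ℕ∞) W := by
    refine ContDiff.sum fun p _ => ?_
    exact (((ContinuousLinearMap.proj p).contDiff).comp hgsm).pow 2
  have h2W : HasCompactSupport W :=
    hg2.comp_left (g := fun u : Fin 2 × Fin 3 → ℝ => ∑ p, (u p) ^ 2) (by simp)
  have hVnn : ∀ x, 0 ≤ V x := fun x => Finset.sum_nonneg fun j _ => sq_nonneg _
  have hWnn : ∀ x, 0 ≤ W x := fun x => Finset.sum_nonneg fun p _ => sq_nonneg _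
  -- the integrand and pointwise Cauchy-Schwarz
  set T : E2 → ℝ := fun x => ∑ j : Fin 3,
    (∑ i : Fin 2, v x i * fderiv ℝ d x (Pi.single i 1) j) ^ 2 with hTdef
  have hTnn : ∀ x, 0 ≤ T x := fun x => Finset.sum_nonneg fun j _ => sq_nonneg _
  have hpt : ∀ x, T x ≤ V x * W x := by
    intro x
    have : ∀ j : Fin 3, (∑ i : Fin 2, v x i * fderiv ℝ d x (Pi.single i 1) j) ^ 2
        ≤ V x * ∑ i : Fin 2, (fderiv ℝ d x (Pi.single i 1) j) ^ 2 :=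
      fun j => Finset.sum_mul_sq_le_sq_mul_sq Finset.univ _ _
    calc T x ≤ ∑ j : Fin 3, V x * ∑ i : Fin 2, (fderiv ℝ d x (Pi.single i 1) j) ^ 2 :=
          Finset.sum_le_sum fun j _ => this j
      _ = V x * W x := by
          rw [← Finset.mul_sum]
          congr 1
          show ∑ j : Fin 3, ∑ i : Fin 2, (fderiv ℝ d x (Pi.single i 1) j) ^ 2
            = ∑ p : Fin 2 × Fin 3, (g x p) ^ 2
          rw [Fintype.sum_prod_type]
          exact Finset.sum_comm ..

  -- continuity and integrability
  have hDcont : ∀ e : E2, Continuous fun x => fderiv ℝ d x e :=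
    fun e => (hd.continuous_fderiv (by simp)).clm_apply continuous_const
  have hTcont : Continuous T := by
    refine continuous_finset_sum _ fun j _ => ?_
    refine Continuous.pow ?_ 2
    refine continuous_finset_sum _ fun i _ => ?_
    exact ((continuous_apply i).comp hv.continuous).mul
      ((continuous_apply j).comp (hDcont (Pi.single i 1)))
  have h2T : HasCompactSupport T := by
    apply hv2.mono
    rw [Function.support_subset_iff]
    intro x hx
    by_contra hvx
    apply hx
    rw [Function.notMem_support] at hvx
    rw [hTdef]
    simp only
    apply Finset.sum_eq_zero
    intro j _
    rw [pow_eq_zero_iff (by norm_num)]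
    apply Finset.sum_eq_zero
    intro i _
    rw [show v x = 0 from hvx]
    simp
  have hιT : Integrable T := hTcont.integrable_of_hasCompactSupport h2T
  have hιVW : Integrable (fun x => V x * W x) := by
    refine ((hVsm.continuous.mul hWsm.continuous).integrable_of_hasCompactSupport ?_)
    exact h2V.mul_right
  -- step 1 : ∫ T ≤ ∫ V W
  have step1 : ∫ x : E2, T x ≤ ∫ x : E2, V x * W x := integral_mono hιT hιVW hpt
  -- step 2 : Hölder
  have hconj : Real.HolderConjugate 2 2 := Real.holderConjugate_iff.mpr ⟨one_lt_two, by norm_num⟩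
  have step2 : ∫ x : E2, V x * W x
      ≤ Real.sqrt (∫ x : E2, (V x) ^ 2) * Real.sqrt (∫ x : E2, (W x) ^ 2) := by
    have h := integral_mul_le_Lp_mul_Lq_of_nonneg hconj
      (Filter.Eventually.of_forall hVnn) (Filter.Eventually.of_forall hWnn)
      (hVsm.continuous.memLp_of_hasCompactSupport h2V :
        MemLp V (ENNReal.ofReal 2) (volume : Measure E2))
      (hWsm.continuous.memLp_of_hasCompactSupport h2W :
        MemLp W (ENNReal.ofReal 2) (volume : Measure E2))
    refine h.trans ?_
    have eV : ∫ x : E2, (V x) ^ (2 : ℝ) = ∫ x : E2, (V x) ^ 2 := by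
      apply integral_congr_ae
      filter_upwards with x
      rw [show (2 : ℝ) = ((2 : ℕ) : ℝ) by norm_num, Real.rpow_natCast]
    have eW : ∫ x : E2, (W x) ^ (2 : ℝ) = ∫ x : E2, (W x) ^ 2 := by
      apply integral_congr_ae
      filter_upwards with x
      rw [show (2 : ℝ) = ((2 : ℕ) : ℝ) by norm_num, Real.rpow_natCast]
    rw [eV, eW, ← Real.sqrt_eq_rpow, ← Real.sqrt_eq_rpow]
  -- step 3 : Ladyzhenskaya bounds
  have hbV := hlad2 v hv hv2
  have hbW := hlad6 g hgsm hg2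
  set A : ℝ := (∫ x : E2, ∑ j, (v x j) ^ 2)
    + ∫ x : E2, ∑ i : Fin 2, ∑ j, (fderiv ℝ v x (Pi.single i 1) j) ^ 2 with hAdef
  set B : ℝ := (∫ x : E2, ∑ p, (g x p) ^ 2)
    + ∫ x : E2, ∑ i : Fin 2, ∑ p, (fderiv ℝ g x (Pi.single i 1) p) ^ 2 with hBdef
  have hA : 0 ≤ A := by
    apply add_nonneg
    · exact integral_nonneg fun x => Finset.sum_nonneg fun j _ => sq_nonneg _
    · exact integral_nonneg fun x =>
        Finset.sum_nonneg fun i _ => Finset.sum_nonneg fun j _ => sq_nonneg _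
  have hB : 0 ≤ B := by
    apply add_nonneg
    · exact integral_nonneg fun x => Finset.sum_nonneg fun p _ => sq_nonneg _
    · exact integral_nonneg fun x =>
        Finset.sum_nonneg fun i _ => Finset.sum_nonneg fun p _ => sq_nonneg _
  have hsV : Real.sqrt (∫ x : E2, (V x) ^ 2) ≤ Real.sqrt C₁ * A := by
    rw [show Real.sqrt C₁ * A = Real.sqrt (C₁ * A ^ 2) by
      rw [Real.sqrt_mul hC₁.le, Real.sqrt_sq hA]]
    exact Real.sqrt_le_sqrt hbV
  have hsW : Real.sqrt (∫ x : E2, (W x) ^ 2) ≤ Real.sqrt C₂ * B := by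
    rw [show Real.sqrt C₂ * B = Real.sqrt (C₂ * B ^ 2) by
      rw [Real.sqrt_mul hC₂.le, Real.sqrt_sq hB]]
    exact Real.sqrt_le_sqrt hbW
  -- combine
  have hsqV : 0 ≤ Real.sqrt (∫ x : E2, (V x) ^ 2) := Real.sqrt_nonneg _
  have hsqW : 0 ≤ Real.sqrt (∫ x : E2, (W x) ^ 2) := Real.sqrt_nonneg _
  have hmain : ∫ x : E2, T x ≤ K * A * B := by
    calc ∫ x : E2, T x ≤ ∫ x : E2, V x * W x := step1
      _ ≤ Real.sqrt (∫ x : E2, (V x) ^ 2) * Real.sqrt (∫ x : E2, (W x) ^ 2) := step2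
      _ ≤ (Real.sqrt C₁ * A) * (Real.sqrt C₂ * B) := by
          apply mul_le_mul hsV hsW hsqW
          positivity
      _ = (Real.sqrt C₁ * Real.sqrt C₂) * A * B := by ring
      _ = K * A * B := by rw [hKdef, Real.sqrt_mul hC₁.le]
  -- identify B with the goal expression
  set D : ℝ := (∫ x : E2, ∑ j, (d x j) ^ 2)
    + (∫ x : E2, ∑ i : Fin 2, ∑ j, (fderiv ℝ d x (Pi.single i 1) j) ^ 2)
    + ∫ x : E2, ∑ i : Fin 2, ∑ i' : Fin 2, ∑ j,
        (fderiv ℝ (fun y => fderiv ℝ d y (Pi.single i' 1)) x (Pi.single i 1) j) ^ 2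
    with hDdef
  have hd0 : 0 ≤ ∫ x : E2, ∑ j, (d x j) ^ 2 :=
    integral_nonneg fun x => Finset.sum_nonneg fun j _ => sq_nonneg _
  have hgcoord : ∀ (x y : E2) (p : Fin 2 × Fin 3),
      fderiv ℝ g x y p = fderiv ℝ (fun z => fderiv ℝ d z (Pi.single p.1 1)) x y p.2 := by
    intro x y p
    rw [← fderiv_pi_apply' g (hgsm.differentiable (by simp)) x y p]
    have hdiff : Differentiable ℝ (fun z => fderiv ℝ d z (Pi.single p.1 1)) :=
      (hd'.clm_apply contDiff_const).differentiable (by simp)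
    exact fderiv_pi_apply' (fun z => fderiv ℝ d z (Pi.single p.1 1)) hdiff x y p.2
  have hBeq1 : ∫ x : E2, ∑ p, (g x p) ^ 2
      = ∫ x : E2, ∑ i : Fin 2, ∑ j, (fderiv ℝ d x (Pi.single i 1) j) ^ 2 := by
    apply integral_congr_ae
    filter_upwards with x
    rw [Fintype.sum_prod_type]
  have hBeq2 : ∫ x : E2, ∑ i : Fin 2, ∑ p, (fderiv ℝ g x (Pi.single i 1) p) ^ 2
      = ∫ x : E2, ∑ i : Fin 2, ∑ i' : Fin 2, ∑ j,
          (fderiv ℝ (fun y => fderiv ℝ d y (Pi.single i' 1)) x (Pi.single i 1) j) ^ 2 := by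
    apply integral_congr_ae
    filter_upwards with x
    apply Finset.sum_congr rfl
    intro i _
    rw [Fintype.sum_prod_type]
    apply Finset.sum_congr rfl
    intro i' _
    apply Finset.sum_congr rfl
    intro j _
    rw [hgcoord x (Pi.single i 1) (i', j)]
  have hBD : B ≤ D := by
    rw [hBdef, hDdef, hBeq1, hBeq2]
    linarith
  have hD : 0 ≤ D := hB.trans hBD
  have hfinal : ∫ x : E2, T x ≤ K * A * D := by
    refine hmain.trans ?_
    have : K * A * B ≤ K * A * D := by
      apply mul_le_mul_of_nonneg_left hBD
      positivity
    exact this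
  -- take square roots
  rw [← Real.sqrt_eq_rpow, ← Real.sqrt_eq_rpow, ← Real.sqrt_eq_rpow]
  calc Real.sqrt (∫ x : E2, T x) ≤ Real.sqrt (K * A * D) :=
        Real.sqrt_le_sqrt hfinal
    _ = Real.sqrt K * Real.sqrt A * Real.sqrt D := by
        rw [Real.sqrt_mul (by positivity), Real.sqrt_mul hK.le]
    _ = Real.sqrt K * Real.sqrt A * Real.sqrt D := rfl
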